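/- For every k ∈ ℕ and m ∈ ℕ₀, the odd moment e_{k,2m+1} = ∫₀¹ 2(sin(kπt))² t^{2m+1} dt equals 1/(2m+2) + Σ_{n=1}^{m} (−1)ⁿ (2m+1)! / ((2(m−n)+2)! · 2^{2n}) · 1/(k^{2n} π^{2n}). -/

import Mathlib

/-!
Since `2 sin²(kπt) = 1 - cos(at)` with `a = 2kπ`, the moment is `1/(n+1) - cₙ` for the
cosine moments `cₙ = ∫₀¹ cos(at) tⁿ dt`. Two integrations by parts (packaged as one
antiderivative) give
`c_{n+2} = (n+2)/a² - (n+2)(n+1)/a² · cₙ`, because `sin a = 0` and `cos a = 1`; together with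
`c₁ = 0` this recursion unrolls to the stated finite sum.
-/

open Real MeasureTheory intervalIntegral Finset

/-- For `k ∈ ℕ` (k ≥ 1) and `n ∈ ℕ₀`, the moment `e_{k,n} = ∫₀¹ 2 (sin(kπt))² tⁿ dt`. -/
noncomputable def bridgeMoment (k n : ℕ) : ℝ :=
  ∫ t in (0:ℝ)..1, 2 * (Real.sin (k * Real.pi * t))^2 * t^n

open scoped Nat

noncomputable def cosMoment (a : ℝ) (n : ℕ) : ℝ :=
  ∫ t in (0:ℝ)..1, cos (a * t) * t ^ n

theorem intervalIntegrable_cos_mul_pow (a : ℝ) (n : ℕ) (u v : ℝ) :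
    IntervalIntegrable (fun t => cos (a * t) * t ^ n) volume u v :=
  (by fun_prop : Continuous fun t : ℝ => cos (a * t) * t ^ n).intervalIntegrable u v

theorem bridgeMoment_eq_sub_cosMoment (k n : ℕ) :
    bridgeMoment k n = 1 / (n + 1) - cosMoment (2 * k * π) n := by
  have two_sin_sq (t : ℝ) :
      2 * sin (k * π * t) ^ 2 * t ^ n = t ^ n - cos (2 * k * π * t) * t ^ n := by
    rw [sin_sq_eq_half_sub]
    ring_nf
  simp only [bridgeMoment, cosMoment, two_sin_sq]
  rw [integral_sub (intervalIntegrable_pow n) (intervalIntegrable_cos_mul_pow _ n 0 1),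
    integral_pow]
  norm_num

theorem hasDerivAt_antideriv_cos_mul_pow_add_two {a : ℝ} (ha : a ≠ 0) (n : ℕ) (t : ℝ) :
    HasDerivAt
      (fun t => t ^ (n + 2) * sin (a * t) / a + (n + 2) * t ^ (n + 1) * cos (a * t) / a ^ 2)
      (cos (a * t) * t ^ (n + 2) + (n + 2) * (n + 1) / a ^ 2 * (cos (a * t) * t ^ n)) t := by
  have hsin := ((hasDerivAt_id t).const_mul a).sin
  have hcos := ((hasDerivAt_id t).const_mul a).cos
  refine ((((hasDerivAt_pow (n + 2) t).mul hsin).div_const a).add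
    ((((hasDerivAt_pow (n + 1) t).const_mul _).mul hcos).div_const (a ^ 2))).congr_deriv ?_
  simp only [id]
  push_cast
  field_simp
  ring

theorem cosMoment_add_two {a : ℝ} (ha : a ≠ 0) (n : ℕ) :
    cosMoment a (n + 2) =
      sin a / a + (n + 2) * cos a / a ^ 2 - (n + 2) * (n + 1) / a ^ 2 * cosMoment a n := by
  have hI := intervalIntegrable_cos_mul_pow a (n + 2) 0 1
  have hI' := (intervalIntegrable_cos_mul_pow a n 0 1).const_mul ((n + 2) * (n + 1) / a ^ 2)
  have hFTC := integral_eq_sub_of_hasDerivAt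
    (fun t _ => hasDerivAt_antideriv_cos_mul_pow_add_two ha n t) (hI.add hI')
  rw [integral_add hI hI', intervalIntegral.integral_const_mul] at hFTC
  simp only [one_pow, one_mul, mul_one, mul_zero, sin_zero, cos_zero, zero_div,
    zero_pow (Nat.succ_ne_zero _), zero_add, sub_zero] at hFTC
  simp only [cosMoment]
  linarith

theorem cosMoment_one {a : ℝ} (ha : a ≠ 0) :
    cosMoment a 1 = sin a / a + (cos a - 1) / a ^ 2 := by
  have hderiv (t : ℝ) : HasDerivAt (fun t => t * sin (a * t) / a + cos (a * t) / a ^ 2)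
      (cos (a * t) * t ^ 1) t := by
    have hsin := ((hasDerivAt_id t).const_mul a).sin
    have hcos := ((hasDerivAt_id t).const_mul a).cos
    refine ((((hasDerivAt_id t).mul hsin).div_const a).add (hcos.div_const (a ^ 2))).congr_deriv ?_
    simp only [id]
    field_simp
    ring
  rw [cosMoment, integral_eq_sub_of_hasDerivAt (fun t _ => hderiv t)
    (intervalIntegrable_cos_mul_pow a 1 0 1)]
  simp only [mul_one, one_mul, mul_zero, sin_zero, zero_div, cos_zero, one_div, zero_add]
  ring

theorem cosMoment_two_mul_add_one {a : ℝ} (ha : a ≠ 0) (hsin : sin a = 0) (hcos : cos a = 1)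
    (m : ℕ) :
    cosMoment a (2 * m + 1) =
      -- the summation index is shifted down by one from the one in `odd_moment_formula`
      ∑ n ∈ range m, (-1) ^ n * ((2 * m + 1)! : ℝ) / (2 * (m - n))! / a ^ (2 * n + 2) := by
  induction m with
  | zero => simp [cosMoment_one ha, hsin, hcos]
  | succ m ih =>
    rw [show 2 * (m + 1) + 1 = 2 * m + 1 + 2 by ring, cosMoment_add_two ha, ih, sum_range_succ',
      mul_sum, hsin, hcos]
    have hfact : ((2 * m + 1 + 2)! : ℝ) = (2 * m + 3) * (2 * m + 2) * (2 * m + 1)! := by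
      rw [show 2 * m + 1 + 2 = 2 * m + 1 + 1 + 1 by ring, Nat.factorial_succ, Nat.factorial_succ]
      push_cast; ring
    have hfact' : ((2 * m + 2)! : ℝ) = (2 * m + 2) * (2 * m + 1)! := by
      rw [Nat.factorial_succ]; push_cast; ring
    simp only [Nat.add_sub_add_right, show 2 * (m + 1 - 0) = 2 * m + 2 by omega, hfact, hfact']
    have hfact_ne : ((2 * m + 1)! : ℝ) ≠ 0 := by positivity
    rw [sub_eq_add_neg, ← sum_neg_distrib, add_comm]
    congr 1
    · refine sum_congr rfl fun n _ => ?_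
      push_cast
      field_simp
      ring
    · push_cast
      field_simp
      ring

theorem odd_moment_formula (k : ℕ) (hk : 1 ≤ k) (m : ℕ) :
    bridgeMoment k (2 * m + 1) = 1 / (2 * (m : ℝ) + 2) +
      ∑ n ∈ Finset.Icc 1 m,
        (-1 : ℝ)^n * (Nat.factorial (2 * m + 1)) /
          ((Nat.factorial (2 * (m - n) + 2)) * 2^(2 * n)) *
            (1 / ((k : ℝ)^(2 * n) * Real.pi^(2 * n))) := by
  have hk0 : (k : ℝ) ≠ 0 := Nat.cast_ne_zero.mpr (by omega)
  have hsin : sin (2 * k * π) = 0 := by simpa [mul_assoc] using sin_nat_mul_pi (2 * k)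
  have hcos : cos (2 * k * π) = 1 := by
    rw [show 2 * (k : ℝ) * π = k * (2 * π) by ring, cos_nat_mul_two_pi]
  rw [bridgeMoment_eq_sub_cosMoment, cosMoment_two_mul_add_one (by positivity) hsin hcos,
    ← Ico_add_one_right_eq_Icc, sum_Ico_eq_sum_range, add_tsub_cancel_right, sub_eq_add_neg,
    ← sum_neg_distrib]
  push_cast
  congr 1
  · ring
  refine sum_congr rfl fun n hn => ?_
  rw [show 2 * (m - (1 + n)) + 2 = 2 * (m - n) by have := mem_range.mp hn; omega]
  field_simp
  ring
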